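/- arXiv:1508.05162 — 2 statements merged into one kernel-verified Lean document; each statement's English description precedes it below -/
import Mathlib

section
/- Let a be a real number. As z = x + iy → a in ℂ, the expansion D_0(z)² = 4 (A_2(a) A_0(a) − A_1(a)²) y² + o(|z − a|²) holds; that is, (B_0(z)² − |A_0(z)|² − 4(A_2(a)A_0(a) − A_1(a)²) y²) / |z − a|² → 0 as z → a. -/
/-!
Write `f(z) = p(z) + i q(z)` with real vectors `p, q`. Then `B₀² - |A₀|²` is four times the Gram
determinant `|p|² |q|² - ⟨p, q⟩²`. Near a real point `a` the `f_j` and `f_j'` take real values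
`c_j, d_j`, so `p → c` and `q = d y + o(|z - a|)`. Since the Gram determinant is quadratic in its
second argument, it equals `(|c|² |d|² - ⟨c, d⟩²) y² + o(|z - a|²)`, and `A₂(a) A₀(a) - A₁(a)²` is
precisely the Gram determinant of `(c, d)`.
-/

open Complex Finset Filter Topology Asymptotics

section Asymptotics

variable {α R : Type*} [SeminormedCommRing R] {l : Filter α} {g : α → ℝ}

theorem Filter.Tendsto.isLittleO_mul_sub_const_mul {u v w : α → R} {c : R}
    (hu : Tendsto u l (𝓝 c)) (hvw : (fun x => v x - w x) =o[l] g) (hw : w =O[l] g) :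
    (fun x => u x * v x - c * w x) =o[l] g := by
  have h₁ : (fun x => u x * (v x - w x)) =o[l] g := by
    simpa using (hu.isBigO_one ℝ).mul_isLittleO hvw
  have h₂ : (fun x => (u x - c) * w x) =o[l] g := by
    simpa using ((isLittleO_one_iff ℝ).2 (tendsto_sub_nhds_zero_iff.2 hu)).mul_isBigO hw
  exact (h₁.add h₂).congr_left fun x => by ring

theorem Asymptotics.IsLittleO.sq_sub_sq {v w : α → R} (hvw : (fun x => v x - w x) =o[l] g)
    (hw : w =O[l] g) : (fun x => v x ^ 2 - w x ^ 2) =o[l] fun x => g x ^ 2 := by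
  have hsum : (fun x => v x + w x) =O[l] g :=
    (hvw.isBigO.add (hw.const_mul_left 2)).congr_left fun x => by ring
  simpa [sq] using (hvw.mul_isBigO hsum).congr_left fun x => by ring

end Asymptotics

def gramDet {ι : Type*} [Fintype ι] (u v : ι → ℝ) : ℝ :=
  (∑ j, u j ^ 2) * (∑ j, v j ^ 2) - (∑ j, u j * v j) ^ 2

theorem sq_sum_sq_norm_sub_sq_norm_sum_sq_eq_four_mul_gramDet {ι : Type*} [Fintype ι]
    (u : ι → ℂ) :
    (∑ j, ‖u j‖ ^ 2) ^ 2 - ‖∑ j, u j ^ 2‖ ^ 2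
      = 4 * gramDet (fun j => (u j).re) (fun j => (u j).im) := by
  have h₁ : ∑ j, ‖u j‖ ^ 2 = ∑ j, (u j).re ^ 2 + ∑ j, (u j).im ^ 2 := by
    rw [← sum_add_distrib]
    exact sum_congr rfl fun j _ => by rw [Complex.sq_norm, normSq_apply]; ring
  have h₂ : ‖∑ j, u j ^ 2‖ ^ 2
      = (∑ j, (u j).re ^ 2 - ∑ j, (u j).im ^ 2) ^ 2 + (2 * ∑ j, (u j).re * (u j).im) ^ 2 := by
    rw [Complex.sq_norm, normSq_apply, re_sum, im_sum]
    simp only [sq, mul_re, mul_im, ← sum_sub_distrib, mul_sum]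
    ring_nf
  rw [h₁, h₂, gramDet]
  ring

theorem isLittleO_gramDet_sub {α ι : Type*} [Fintype ι] {l : Filter α} {p q : ι → α → ℝ}
    {c d : ι → ℝ} {s g : α → ℝ} (hp : ∀ j, Tendsto (p j) l (𝓝 (c j)))
    (hq : ∀ j, (fun x => q j x - d j * s x) =o[l] g) (hs : s =O[l] g) :
    (fun x => gramDet (p · x) (q · x) - gramDet c d * s x ^ 2) =o[l] fun x => g x ^ 2 := by
  have hds : ∀ j, (fun x => d j * s x) =O[l] g := fun j => hs.const_mul_left (d j)
  have hP : Tendsto (fun x => ∑ j, p j x ^ 2) l (𝓝 (∑ j, c j ^ 2)) :=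
    tendsto_finsetSum _ fun j _ => (hp j).pow 2
  have hQ : (fun x => ∑ j, q j x ^ 2 - (∑ j, d j ^ 2) * s x ^ 2) =o[l] fun x => g x ^ 2 := by
    refine (IsLittleO.sum (s := univ) fun j _ => (hq j).sq_sub_sq (hds j)).congr_left fun x => ?_
    simp only [Finset.sum_apply, sum_mul, ← sum_sub_distrib, mul_pow]
  have hR : (fun x => ∑ j, p j x * q j x - (∑ j, c j * d j) * s x) =o[l] g := by
    refine (IsLittleO.sum (s := univ) fun j _ =>
      (hp j).isLittleO_mul_sub_const_mul (hq j) (hds j)).congr_left fun x => ?_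
    simp only [Finset.sum_apply, sum_mul, ← sum_sub_distrib, mul_assoc]
  have hPQ := hP.isLittleO_mul_sub_const_mul hQ ((hs.pow 2).const_mul_left (∑ j, d j ^ 2))
  have hR₂ := hR.sq_sub_sq (hs.const_mul_left (∑ j, c j * d j))
  refine (hPQ.sub (by simpa [sq] using hR₂)).congr_left fun x => ?_
  simp only [gramDet]
  ring

theorem HasDerivAt.im_eq_zero_of_forall_im_eq_zero {f : ℂ → ℂ} {f' : ℂ} {a : ℝ}
    (hf : HasDerivAt f f' a) (hreal : ∀ x : ℝ, (f x).im = 0) : f'.im = 0 := by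
  have h := imCLM.hasFDerivAt.comp_hasDerivAt (a : ℝ) hf.comp_ofReal
  refine h.unique ?_
  simpa [Function.comp_def, hreal] using hasDerivAt_const (a : ℝ) (0 : ℝ)

theorem HasDerivAt.isLittleO_im_sub {f : ℂ → ℂ} {f' : ℂ} {a : ℝ} (hf : HasDerivAt f f' a)
    (ha : (f a).im = 0) (h' : f'.im = 0) :
    (fun z => (f z).im - f'.re * z.im) =o[𝓝 (a : ℂ)] fun z => ‖z - a‖ := by
  have h := (imCLM.isBigO_comp _ _).trans_isLittleO (hasDerivAt_iff_isLittleO.1 hf)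
  refine h.norm_right.congr_left fun z => ?_
  simp [ha, h', mul_comm]

theorem isBigO_im_nhds_ofReal (a : ℝ) : im =O[𝓝 (a : ℂ)] fun z => ‖z - a‖ :=
  IsBigO.of_bound 1 (.of_forall fun z => by simpa using abs_im_le_norm (z - a))

/-- **(Vanderbei, proof of Lemma 2.)** Near a real point `a`, the expansion
`D₀(z)² = B₀(z)² − |A₀(z)|² = 4 (A₂(a)A₀(a) − A₁(a)²) y² + o(|z−a|²)` holds, where `y = Im z`. -/
theorem D0_sq_expansion
    {n : ℕ} (f : Fin (n + 1) → ℂ → ℂ)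
    (hf_entire : ∀ j, Differentiable ℂ (f j))
    (hf_real : ∀ j, ∀ x : ℝ, (f j (x : ℂ)).im = 0)
    (A0 A1 A2 : ℂ → ℂ) (B0 : ℂ → ℝ)
    (hA0 : ∀ z, A0 z = ∑ j, (f j z) ^ 2)
    (hA1 : ∀ z, A1 z = ∑ j, f j z * deriv (f j) z)
    (hA2 : ∀ z, A2 z = ∑ j, (deriv (f j) z) ^ 2)
    (hB0 : ∀ z, B0 z = ∑ j, ‖f j z‖ ^ 2)
    (a : ℝ) :
    Tendsto
      (fun z : ℂ =>
        (((B0 z : ℂ) ^ 2 - (‖A0 z‖ ^ 2 : ℝ)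
            - 4 * (A2 (a : ℂ) * A0 (a : ℂ) - (A1 (a : ℂ)) ^ 2) * (z.im : ℂ) ^ 2)
          / (‖z - (a : ℂ)‖ ^ 2 : ℝ)))
      (𝓝[{(a : ℂ)}ᶜ] (a : ℂ)) (𝓝 0) := by
  set c : Fin (n + 1) → ℝ := fun j => (f j a).re
  set d : Fin (n + 1) → ℝ := fun j => (deriv (f j) a).re
  have hd_im : ∀ j, (deriv (f j) a).im = 0 := fun j =>
    (hf_entire j a).hasDerivAt.im_eq_zero_of_forall_im_eq_zero (hf_real j)
  have hc : ∀ j, f j a = c j := fun j => Complex.ext rfl (by simp [hf_real j a])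
  have hd : ∀ j, deriv (f j) a = d j := fun j => Complex.ext rfl (by simp [hd_im j])
  have hgram := isLittleO_gramDet_sub (c := c) (d := d)
    (p := fun j z => (f j z).re) (q := fun j z => (f j z).im)
    (fun j => (continuous_re.comp (hf_entire j).continuous).tendsto _)
    (fun j => (hf_entire j a).hasDerivAt.isLittleO_im_sub (hf_real j a) (hd_im j))
    (isBigO_im_nhds_ofReal a)
  have hA_a : A2 a * A0 a - A1 a ^ 2 = gramDet c d := by
    simp only [hA0, hA1, hA2, hc, hd, gramDet]
    push_cast
    ring
  have hnum : ∀ z, (B0 z : ℂ) ^ 2 - (‖A0 z‖ ^ 2 : ℝ)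
      - 4 * (A2 (a : ℂ) * A0 (a : ℂ) - (A1 (a : ℂ)) ^ 2) * (z.im : ℂ) ^ 2
      = ((4 * (gramDet (fun j => (f j z).re) (fun j => (f j z).im) - gramDet c d * z.im ^ 2) :
          ℝ) : ℂ) := fun z => by
    have hlag := sq_sum_sq_norm_sub_sq_norm_sum_sq_eq_four_mul_gramDet (fun j => f j z)
    rw [← hB0, ← hA0] at hlag
    rw [hA_a, mul_sub 4, ← hlag]
    push_cast
    ring
  have hlim := ((hgram.const_mul_left 4).mono
    (nhdsWithin_le_nhds (s := {(a : ℂ)}ᶜ))).tendsto_div_nhds_zero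
  simpa only [hnum, Function.comp_def, ofReal_div, ofReal_zero] using
    (continuous_ofReal.tendsto 0).comp hlim
end

section
/- For the Fourier sine/cosine basis with n = 2m even, the complex-zero intensity function h_n depends only on the imaginary part of its argument: for all z, z' ∈ ℂ with Im(z) = Im(z') ≠ 0 and D_0(z) ≠ 0, one has D_0(z') ≠ 0 and h_n(z) = h_n(z'). -/
/-!
Since `sin² + cos² = 1`, `A₀ ≡ m + 1` and `A₁ ≡ 0`. In `B₀`, `B₁`, `B₂` the pair
`sin (k z), cos (k z)` enters only through `conj (sin w) = sin (conj w)` and the addition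
formulas, which combine it into `cos (k (z̄ - z))` and `sin (k (z̄ - z))`; as
`z̄ - z = -2 i Im z`, these are `cosh (2 k Im z)` and `-i sinh (2 k Im z)`.
-/

open Complex Finset ComplexConjugate

theorem conj_sub_self (w : ℂ) : conj w - w = (-2 * w.im : ℝ) * I := by
  rw [← neg_sub, sub_conj]; push_cast; ring

theorem norm_sin_sq_add_norm_cos_sq (w : ℂ) :
    ‖sin w‖ ^ 2 + ‖cos w‖ ^ 2 = Real.cosh (2 * w.im) := by
  apply ofReal_injective
  calc ((‖sin w‖ ^ 2 + ‖cos w‖ ^ 2 : ℝ) : ℂ) = cos (conj w - w) := by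
        push_cast
        rw [← mul_conj', ← mul_conj', ← sin_conj, ← cos_conj, cos_sub]
        ring
    _ = Real.cosh (2 * w.im) := by
        rw [conj_sub_self, cos_mul_I, ← ofReal_cosh, neg_mul, Real.cosh_neg]

theorem conj_sin_mul_cos_sub_conj_cos_mul_sin (w : ℂ) :
    conj (sin w) * cos w - conj (cos w) * sin w = -Real.sinh (2 * w.im) * I := by
  rw [← sin_conj, ← cos_conj, ← sin_sub, conj_sub_self, sin_mul_I, ← ofReal_sinh, neg_mul,
    Real.sinh_neg, ofReal_neg]

theorem deriv_sin_const_mul (c z : ℂ) : deriv (fun w => sin (c * w)) z = c * cos (c * z) := by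
  simpa [mul_comm] using (((hasDerivAt_id z).const_mul c).csin).deriv

theorem deriv_cos_const_mul (c z : ℂ) : deriv (fun w => cos (c * w)) z = -c * sin (c * z) := by
  simpa [mul_comm] using (((hasDerivAt_id z).const_mul c).ccos).deriv

theorem sum_range_two_mul_add_one {M : Type*} [AddCommMonoid M] (g : ℕ → M) (n : ℕ) :
    ∑ j ∈ range (2 * n + 1), g j =
      g 0 + ∑ k ∈ range n, (g (2 * k + 1) + g (2 * k + 2)) := by
  induction n with
  | zero => simp
  | succ n ih =>
    rw [show 2 * (n + 1) + 1 = 2 * n + 1 + 1 + 1 by ring, sum_range_succ, sum_range_succ, ih,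
      sum_range_succ]
    abel

structure IsTrigBasis (m : ℕ) (f : ℕ → ℂ → ℂ) : Prop where
  apply_zero : ∀ z, f 0 z = 1
  apply_odd : ∀ k : ℕ, 1 ≤ k → k ≤ m → ∀ z, f (2 * k - 1) z = sin ((k : ℂ) * z)
  apply_even : ∀ k : ℕ, 1 ≤ k → k ≤ m → ∀ z, f (2 * k) z = cos ((k : ℂ) * z)

namespace IsTrigBasis

variable {m : ℕ} {f : ℕ → ℂ → ℂ}

theorem sum_eq (hf : IsTrigBasis m f) {M : Type*} [AddCommMonoid M] (G : (ℂ → ℂ) → M) :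
    ∑ j ∈ range (2 * m + 1), G (f j) = G (fun _ => 1) +
      ∑ k ∈ range m, (G (fun z => sin ((k + 1) * z)) + G (fun z => cos ((k + 1) * z))) := by
  rw [sum_range_two_mul_add_one, funext hf.apply_zero]
  refine congrArg _ (sum_congr rfl fun k hk => ?_)
  have hkm : k + 1 ≤ m := mem_range.mp hk
  have hsin := funext (hf.apply_odd (k + 1) (Nat.le_add_left 1 k) hkm)
  have hcos := funext (hf.apply_even (k + 1) (Nat.le_add_left 1 k) hkm)
  rw [show 2 * (k + 1) - 1 = 2 * k + 1 by omega] at hsin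
  rw [show 2 * (k + 1) = 2 * k + 2 by omega] at hcos
  push_cast at hsin hcos
  rw [hsin, hcos]

theorem sum_sq (hf : IsTrigBasis m f) (z : ℂ) :
    ∑ j ∈ range (2 * m + 1), f j z ^ 2 = m + 1 := by
  rw [hf.sum_eq fun g => g z ^ 2]
  simp [add_comm]

theorem sum_mul_deriv (hf : IsTrigBasis m f) (z : ℂ) :
    ∑ j ∈ range (2 * m + 1), f j z * deriv (f j) z = 0 := by
  rw [hf.sum_eq fun g => g z * deriv g z]
  simp only [deriv_const, mul_zero, deriv_sin_const_mul, deriv_cos_const_mul, zero_add]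
  exact sum_eq_zero fun k _ => by ring

theorem sum_norm_sq (hf : IsTrigBasis m f) (z : ℂ) :
    ∑ j ∈ range (2 * m + 1), ‖f j z‖ ^ 2 =
      1 + ∑ k ∈ range m, Real.cosh (2 * ((k + 1) * z.im)) := by
  rw [hf.sum_eq fun g => ‖g z‖ ^ 2]
  simp [norm_sin_sq_add_norm_cos_sq]

theorem sum_conj_mul_deriv (hf : IsTrigBasis m f) (z : ℂ) :
    ∑ j ∈ range (2 * m + 1), conj (f j z) * deriv (f j) z =
      ∑ k ∈ range m, -(((k : ℂ) + 1) * Real.sinh (2 * ((k + 1) * z.im))) * I := by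
  rw [hf.sum_eq fun g => conj (g z) * deriv g z]
  simp only [deriv_const, mul_zero, deriv_sin_const_mul, deriv_cos_const_mul, zero_add]
  refine sum_congr rfl fun k _ => ?_
  have h := conj_sin_mul_cos_sub_conj_cos_mul_sin ((k + 1) * z)
  rw [show (((k : ℂ) + 1) * z).im = (k + 1) * z.im by simp] at h
  linear_combination ((k : ℂ) + 1) * h

theorem sum_norm_sq_deriv (hf : IsTrigBasis m f) (z : ℂ) :
    ∑ j ∈ range (2 * m + 1), ‖deriv (f j) z‖ ^ 2 =
      ∑ k ∈ range m, (k + 1) ^ 2 * Real.cosh (2 * ((k + 1) * z.im)) := by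
  rw [hf.sum_eq fun g => ‖deriv g z‖ ^ 2]
  simp only [deriv_const, norm_zero, deriv_sin_const_mul, deriv_cos_const_mul,
    zero_pow two_ne_zero, zero_add]
  refine sum_congr rfl fun k _ => ?_
  rw [norm_mul, norm_mul, norm_neg, mul_pow, mul_pow, ← mul_add, add_comm (‖cos _‖ ^ 2),
    norm_sin_sq_add_norm_cos_sq, show (((k : ℂ) + 1) * z).im = (k + 1) * z.im by simp]
  norm_cast

end IsTrigBasis

theorem fourier_intensity_depends_only_on_im_general
    (m : ℕ)
    (f : ℕ → ℂ → ℂ)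
    (hf0 : ∀ z, f 0 z = 1)
    (hfodd : ∀ k : ℕ, 1 ≤ k → k ≤ m → ∀ z, f (2 * k - 1) z = Complex.sin ((k : ℂ) * z))
    (hfeven : ∀ k : ℕ, 1 ≤ k → k ≤ m → ∀ z, f (2 * k) z = Complex.cos ((k : ℂ) * z))
    (A0 A1 B1 : ℂ → ℂ) (B0 B2 D0 : ℂ → ℝ) (h : ℂ → ℝ)
    (hA0 : ∀ z, A0 z = ∑ j ∈ Finset.range (2 * m + 1), (f j z) ^ 2)
    (hA1 : ∀ z, A1 z = ∑ j ∈ Finset.range (2 * m + 1), f j z * deriv (f j) z)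
    (hB1 : ∀ z, B1 z = ∑ j ∈ Finset.range (2 * m + 1),
        (starRingEnd ℂ) (f j z) * deriv (f j) z)
    (hB0 : ∀ z, B0 z = ∑ j ∈ Finset.range (2 * m + 1), ‖f j z‖ ^ 2)
    (hB2 : ∀ z, B2 z = ∑ j ∈ Finset.range (2 * m + 1), ‖deriv (f j) z‖ ^ 2)
    (hD0 : ∀ z, D0 z = Real.sqrt ((B0 z) ^ 2 - ‖A0 z‖ ^ 2))
    (hh : ∀ z, h z =
      (B2 z * (D0 z) ^ 2 - B0 z * (‖B1 z‖ ^ 2 + ‖A1 z‖ ^ 2)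
        + (A0 z * B1 z * (starRingEnd ℂ) (A1 z)
            + (starRingEnd ℂ) (A0 z * B1 z) * A1 z).re)
        / (Real.pi * (D0 z) ^ 3)) :
    ∀ z z' : ℂ, z.im = z'.im → z.im ≠ 0 → D0 z ≠ 0 → D0 z' ≠ 0 ∧ h z = h z' := by
  intro z z' him _ hD0z
  have hf : IsTrigBasis m f := ⟨hf0, hfodd, hfeven⟩
  have hA0e : A0 z = A0 z' := by rw [hA0, hA0, hf.sum_sq, hf.sum_sq]
  have hA1e : A1 z = A1 z' := by rw [hA1, hA1, hf.sum_mul_deriv, hf.sum_mul_deriv]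
  have hB0e : B0 z = B0 z' := by rw [hB0, hB0, hf.sum_norm_sq, hf.sum_norm_sq, him]
  have hB1e : B1 z = B1 z' := by
    rw [hB1, hB1, hf.sum_conj_mul_deriv, hf.sum_conj_mul_deriv, him]
  have hB2e : B2 z = B2 z' := by
    rw [hB2, hB2, hf.sum_norm_sq_deriv, hf.sum_norm_sq_deriv, him]
  have hD0e : D0 z = D0 z' := by rw [hD0, hD0, hB0e, hA0e]
  exact ⟨hD0e ▸ hD0z, by rw [hh, hh, hA0e, hA1e, hB0e, hB1e, hB2e, hD0e]⟩

/-- **(Vanderbei, Fourier sine/cosine series.)** For the sine/cosine basis with `n = 2m`, the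
complex-zero intensity `h_n` depends only on the imaginary part: if `Im z = Im z' ≠ 0` and
`D₀(z) ≠ 0`, then `D₀(z') ≠ 0` and `h_n(z) = h_n(z')`. -/
theorem fourier_intensity_depends_only_on_im
    (m : ℕ) (hm : 0 < m)
    (f : ℕ → ℂ → ℂ)
    (hf0 : ∀ z, f 0 z = 1)
    (hfodd : ∀ k : ℕ, 1 ≤ k → k ≤ m → ∀ z, f (2 * k - 1) z = Complex.sin ((k : ℂ) * z))
    (hfeven : ∀ k : ℕ, 1 ≤ k → k ≤ m → ∀ z, f (2 * k) z = Complex.cos ((k : ℂ) * z))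
    (A0 A1 B1 : ℂ → ℂ) (B0 B2 D0 : ℂ → ℝ) (h : ℂ → ℝ)
    (hA0 : ∀ z, A0 z = ∑ j ∈ Finset.range (2 * m + 1), (f j z) ^ 2)
    (hA1 : ∀ z, A1 z = ∑ j ∈ Finset.range (2 * m + 1), f j z * deriv (f j) z)
    (hB1 : ∀ z, B1 z = ∑ j ∈ Finset.range (2 * m + 1),
        (starRingEnd ℂ) (f j z) * deriv (f j) z)
    (hB0 : ∀ z, B0 z = ∑ j ∈ Finset.range (2 * m + 1), ‖f j z‖ ^ 2)
    (hB2 : ∀ z, B2 z = ∑ j ∈ Finset.range (2 * m + 1), ‖deriv (f j) z‖ ^ 2)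
    (hD0 : ∀ z, D0 z = Real.sqrt ((B0 z) ^ 2 - ‖A0 z‖ ^ 2))
    (hh : ∀ z, h z =
      (B2 z * (D0 z) ^ 2 - B0 z * (‖B1 z‖ ^ 2 + ‖A1 z‖ ^ 2)
        + (A0 z * B1 z * (starRingEnd ℂ) (A1 z)
            + (starRingEnd ℂ) (A0 z * B1 z) * A1 z).re)
        / (Real.pi * (D0 z) ^ 3)) :
    ∀ z z' : ℂ, z.im = z'.im → z.im ≠ 0 → D0 z ≠ 0 → D0 z' ≠ 0 ∧ h z = h z' :=
  fourier_intensity_depends_only_on_im_general m f hf0 hfodd hfeven A0 A1 B1 B0 B2 D0 h hA0 hA1 hB1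
    hB0 hB2 hD0 hh
end
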